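/- Let ℕ* = ℕ ∪ {∞}, Inc the space of nondecreasing maps ℕ → ℕ* strictly increasing where finite, Q ⊆ Inc its set of eventually-∞ points, and k ≥ 1. Suppose Q^k ⊆ X^k ⊆ Inc^k and Ψ : X^k → ℕ^ℕ is continuous at every point of Q^k. Then there exists g ∈ ℕ^ℕ such that for every n ∈ ℕ and all x_1, …, x_k ∈ X: if g(n) < min{x_1(n), …, x_k(n)}, then Ψ(x_1, …, x_k)(n) ≤ g(n). -/

import Mathlib

/-!
Fix `n` and suppose no bound works: pick `x_G ∈ X^k` whose `n`-th coordinates all exceed `G`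
while `Ψ(x_G)(n) > G`. As `Inc` is closed in the compact space `(ℕ*)^ℕ`, the `x_G` cluster at
some `z ∈ Inc^k`. Then `z_i(n) = ∞` for every `i`, so each `z_i` is eventually `∞` and `z ∈ Q^k`.
Continuity of `Ψ` at `z` into the discrete space `ℕ` forces `Ψ(x_G)(n) = Ψ(z)(n)` for infinitely
many `G`, contradicting `Ψ(x_G)(n) > G`.
-/

open Filter OnePoint

def opLE (a b : OnePoint ℕ) : Prop :=
  ∀ m : ℕ, b = (m : OnePoint ℕ) → ∃ m' : ℕ, a = (m' : OnePoint ℕ) ∧ m' ≤ m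

def opLT (a b : OnePoint ℕ) : Prop :=
  ∀ m : ℕ, b = (m : OnePoint ℕ) → ∃ m' : ℕ, a = (m' : OnePoint ℕ) ∧ m' < m

/-- The set of nondecreasing functions `ℕ → ℕ ∪ {∞}` which are strictly
increasing where finite. -/
def Inc : Set (ℕ → OnePoint ℕ) :=
  {f | (∀ n, opLE (f n) (f (n + 1))) ∧
       ∀ n, (∃ m : ℕ, f n = (m : OnePoint ℕ)) → opLT (f n) (f (n + 1))}

/-- The set of eventually-∞ elements of `Inc`. -/
def Qinf : Set (ℕ → OnePoint ℕ) :=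
  {f ∈ Inc | ∀ᶠ n in atTop, f n = (∞ : OnePoint ℕ)}

open Set Topology

lemma opLE_of_opLT {a b : OnePoint ℕ} (h : opLT a b) : opLE a b := fun m hb =>
  let ⟨m', ha, hlt⟩ := h m hb
  ⟨m', ha, hlt.le⟩

lemma eq_infty_of_opLT_infty {b : OnePoint ℕ} (h : opLT ∞ b) : b = ∞ := by
  induction b using OnePoint.rec with
  | infty => rfl
  | coe m => exact absurd (h m rfl).choose_spec.1 (infty_ne_coe _)

lemma mem_Inc_iff {f : ℕ → OnePoint ℕ} : f ∈ Inc ↔ ∀ n, opLT (f n) (f (n + 1)) := by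
  refine ⟨fun hf n m hm => ?_, fun hf => ⟨fun n => opLE_of_opLT (hf n), fun n _ => hf n⟩⟩
  obtain ⟨m', hm', -⟩ := hf.1 n m hm
  exact hf.2 n ⟨m', hm'⟩ m hm

lemma isOpen_singleton_coe (m : ℕ) : IsOpen {(m : OnePoint ℕ)} := by
  rw [← image_singleton]
  exact isOpen_image_coe.mpr (isOpen_discrete _)

lemma isClosed_setOf_opLT : IsClosed {p : OnePoint ℕ × OnePoint ℕ | opLT p.1 p.2} := by
  have hcompl : {p : OnePoint ℕ × OnePoint ℕ | opLT p.1 p.2}ᶜ =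
      ⋃ m : ℕ, (((↑) '' Iio m : Set (OnePoint ℕ))ᶜ ×ˢ {(m : OnePoint ℕ)}) := by
    ext ⟨a, b⟩
    simp only [opLT, mem_compl_iff, mem_ofPred_eq, mem_iUnion, mem_prod, mem_image, mem_Iio,
      mem_singleton_iff, not_forall, not_exists, exists_prop]
    constructor
    · rintro ⟨m, rfl, hm⟩
      exact ⟨m, fun m' ⟨hm', ha⟩ => hm m' ⟨ha.symm, hm'⟩, rfl⟩
    · rintro ⟨m, hm, rfl⟩
      exact ⟨m, rfl, fun m' ⟨ha, hm'⟩ => hm m' ⟨hm', ha.symm⟩⟩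
  refine isOpen_compl_iff.mp (hcompl ▸ isOpen_iUnion fun m => ?_)
  exact (isOpen_compl_image_coe.mpr ⟨isClosed_discrete _, (finite_Iio m).isCompact⟩).prod
    (isOpen_singleton_coe m)

lemma isClosed_Inc : IsClosed Inc := by
  have hInc : Inc = ⋂ n, (fun f : ℕ → OnePoint ℕ => (f n, f (n + 1))) ⁻¹'
      {p : OnePoint ℕ × OnePoint ℕ | opLT p.1 p.2} := by
    ext f
    simp only [mem_Inc_iff, mem_iInter, mem_preimage, mem_ofPred_eq]
  rw [hInc]
  exact isClosed_iInter fun n => isClosed_setOf_opLT.preimage (by fun_prop)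

lemma eq_infty_of_mem_Inc {f : ℕ → OnePoint ℕ} (hf : f ∈ Inc) {n m : ℕ} (hn : f n = ∞)
    (hnm : n ≤ m) : f m = ∞ := by
  induction m, hnm using Nat.le_induction with
  | base => exact hn
  | succ m _ ih => exact eq_infty_of_opLT_infty (ih ▸ mem_Inc_iff.mp hf m)

lemma mem_Qinf_of_eq_infty {f : ℕ → OnePoint ℕ} (hf : f ∈ Inc) {n : ℕ} (hn : f n = ∞) :
    f ∈ Qinf :=
  ⟨hf, eventually_atTop.mpr ⟨n, fun _ => eq_infty_of_mem_Inc hf hn⟩⟩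

lemma eq_infty_of_mapClusterPt {ι : Type*} {x : ℕ → ι → ℕ → OnePoint ℕ} {z : ι → ℕ → OnePoint ℕ}
    (hz : MapClusterPt z atTop x) {n : ℕ}
    (hx : ∀ G i (m : ℕ), x G i n = (m : OnePoint ℕ) → G < m) (i : ι) : z i n = ∞ := by
  induction hzi : z i n using OnePoint.rec with
  | infty => rfl
  | coe c =>
    have hnhds : {y : ι → ℕ → OnePoint ℕ | y i n = (c : OnePoint ℕ)} ∈ 𝓝 z :=
      ((isOpen_singleton_coe c).preimage (by fun_prop)).mem_nhds hzi
    obtain ⟨G, hG, hcG⟩ :=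
      ((mapClusterPt_iff_frequently.mp hz _ hnhds).and_eventually (eventually_ge_atTop c)).exists
    exact absurd (hx G i c hG) (not_lt.mpr hcG)

lemma exists_bound_of_continuousWithinAt {ι : Type*} {X : Set (ℕ → OnePoint ℕ)}
    (hXInc : X ⊆ Inc) {φ : (ι → ℕ → OnePoint ℕ) → ℕ}
    (hφ : ∀ q : ι → ℕ → OnePoint ℕ, (∀ i, q i ∈ Qinf) →
      ContinuousWithinAt φ {x | ∀ i, x i ∈ X} q) (n : ℕ) :
    ∃ G : ℕ, ∀ x : ι → ℕ → OnePoint ℕ, (∀ i, x i ∈ X) →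
      (∀ i (m : ℕ), x i n = (m : OnePoint ℕ) → G < m) → φ x ≤ G := by
  by_contra! h
  choose x hxX hxn hφx using h
  obtain ⟨z, hzInc, hz⟩ :=
    (isCompact_pi_infinite fun _ => isClosed_Inc.isCompact).exists_mapClusterPt (f := atTop)
      (tendsto_principal.mpr (Eventually.of_forall fun G i => hXInc (hxX G i)))
  have hzQ : ∀ i, z i ∈ Qinf := fun i =>
    mem_Qinf_of_eq_infty (hzInc i) (eq_infty_of_mapClusterPt hz hxn i)
  have hφz : ∀ᶠ y in 𝓝[{x | ∀ i, x i ∈ X}] z, φ y = φ z :=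
    tendsto_pure.mp (nhds_discrete ℕ ▸ hφ z hzQ)
  obtain ⟨U, hU, hUφ⟩ := mem_nhdsWithin_iff_exists_mem_nhds_inter.mp hφz
  obtain ⟨G, hGU, hφzG⟩ := ((mapClusterPt_iff_frequently.mp hz U hU).and_eventually
    (eventually_ge_atTop (φ z))).exists
  have hφxG : φ (x G) = φ z := hUφ ⟨hGU, hxX G⟩
  exact absurd (hφx G) (not_lt.mpr (hφxG ▸ hφzG))

theorem stmt13_general (k : ℕ) (X : Set (ℕ → OnePoint ℕ))
    (hXInc : X ⊆ Inc)
    (Ψ : (Fin k → ℕ → OnePoint ℕ) → ℕ → ℕ)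
    (hcont : ∀ q : Fin k → ℕ → OnePoint ℕ, (∀ i, q i ∈ Qinf) →
      ContinuousWithinAt Ψ {x | ∀ i, x i ∈ X} q) :
    ∃ g : ℕ → ℕ, ∀ n : ℕ, ∀ x : Fin k → ℕ → OnePoint ℕ, (∀ i, x i ∈ X) →
      (∀ i, ∀ m : ℕ, x i n = (m : OnePoint ℕ) → g n < m) →
      Ψ x n ≤ g n := by
  choose g hg using fun n => exists_bound_of_continuousWithinAt hXInc
    (fun q hq => (continuous_apply n).continuousAt.comp_continuousWithinAt (hcont q hq)) n
  exact ⟨g, hg⟩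

theorem stmt13 (k : ℕ) (hk : 1 ≤ k) (X : Set (ℕ → OnePoint ℕ))
    (hQX : Qinf ⊆ X) (hXInc : X ⊆ Inc)
    (Ψ : (Fin k → ℕ → OnePoint ℕ) → ℕ → ℕ)
    (hcont : ∀ q : Fin k → ℕ → OnePoint ℕ, (∀ i, q i ∈ Qinf) →
      ContinuousWithinAt Ψ {x | ∀ i, x i ∈ X} q) :
    ∃ g : ℕ → ℕ, ∀ n : ℕ, ∀ x : Fin k → ℕ → OnePoint ℕ, (∀ i, x i ∈ X) →
      (∀ i, ∀ m : ℕ, x i n = (m : OnePoint ℕ) → g n < m) →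
      Ψ x n ≤ g n :=
  stmt13_general k X hXInc Ψ hcont
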